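/- Let S be a nonempty finite set, m a natural number, and f : S → ℕ a function such that ∑_{s ∈ S} 3^(f(s)) ≤ (1 + 3^m)·#S. Then 2·3^m·∑_{s ∈ S} f(s) ≤ (2m·3^m + 1)·#S; equivalently, the average of f over S is at most m + (1/2)·3^(−m). -/
import Mathlib

lemma two_k_add_one_le : ∀ k : ℕ, 2 * k + 1 ≤ 3 ^ k := by
  intro k
  induction k with
  | zero => norm_num
  | succ n ih =>
    have : (3:ℕ) ^ (n+1) = 3 * 3 ^ n := by ring
    omega

lemma pointwise (m r : ℕ) : 2 * 3 ^ m * r + 3 ^ m ≤ 3 ^ r + 2 * m * 3 ^ m := by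
  rcases le_or_gt m r with hle | hlt
  · obtain ⟨k, rfl⟩ := Nat.exists_eq_add_of_le hle
    have h1 := two_k_add_one_le k
    have h2 : 3 ^ m * (2 * k + 1) ≤ 3 ^ m * 3 ^ k := Nat.mul_le_mul_left _ h1
    have h3 : 3 ^ (m + k) = 3 ^ m * 3 ^ k := pow_add 3 m k
    nlinarith [h2]
  · have h1 : 2 * r + 1 ≤ 2 * m := by omega
    have h2 : 3 ^ m * (2 * r + 1) ≤ 3 ^ m * (2 * m) := Nat.mul_le_mul_left _ h1
    have h3 : 2 * 3 ^ m * r + 3 ^ m = 3 ^ m * (2 * r + 1) := by ring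
    have h4 : 3 ^ m * (2 * m) = 2 * m * 3 ^ m := by ring
    calc 2 * 3 ^ m * r + 3 ^ m = 3 ^ m * (2 * r + 1) := h3
      _ ≤ 3 ^ m * (2 * m) := h2
      _ = 2 * m * 3 ^ m := h4
      _ ≤ 3 ^ r + 2 * m * 3 ^ m := Nat.le_add_left _ _

/-- If the average of `3 ^ f s` over a nonempty finite set `S` is at most
`1 + 3 ^ m`, then the average of `f` over `S` is at most `m + (1/2) * 3⁻ᵐ`,
i.e. `2 * 3^m * ∑ f ≤ (2m * 3^m + 1) * #S`. -/
theorem avg_rank_le_of_avg_card_le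
    (S : Type*) [Fintype S] [Nonempty S] (m : ℕ) (f : S → ℕ)
    (h : ∑ s : S, 3 ^ f s ≤ (1 + 3 ^ m) * Fintype.card S) :
    2 * 3 ^ m * ∑ s : S, f s ≤ (2 * m * 3 ^ m + 1) * Fintype.card S := by
  have key : ∑ s : S, (2 * 3 ^ m * f s + 3 ^ m) ≤ ∑ s : S, (3 ^ f s + 2 * m * 3 ^ m) :=
    Finset.sum_le_sum fun s _ => pointwise m (f s)
  rw [Finset.sum_add_distrib, Finset.sum_add_distrib, ← Finset.mul_sum,
    Finset.sum_const, Finset.sum_const, Finset.card_univ, smul_eq_mul, smul_eq_mul] at key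
  linarith
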